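/- Let p : {0,1}^n → ℝ be a probability distribution with Σ_{x} p(x)² ≤ α·2^(−n) for some α > 0. Let ε ∈ (0,1), ℓ ∈ ℕ, γ > 0, and suppose p' : {0,1}^n → ℝ satisfies |p'(s) − p̂(s)| ≤ γ·2^(−n) for all s with Hamming weight |s| ≤ ℓ. Define q̃ : {0,1}^n → ℝ by q̃(x) = Σ_{s : |s| ≤ ℓ} (1−ε)^(|s|)·p'(s)·(−1)^(s·x), and let p̃ = N_ε p be the noisy version of p. Then Σ_{x∈{0,1}^n} |q̃(x) − p̃(x)| ≤ sqrt(γ²·(n^ℓ + 1) + α·(1−ε)^(2ℓ)). -/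

import Mathlib

open Finset

noncomputable section

/-- `s · x`: the number of coordinates where both `s` and `x` equal `1`. -/
def bdot {n : ℕ} (s x : Fin n → ZMod 2) : ℕ :=
  (Finset.univ.filter (fun i => s i = 1 ∧ x i = 1)).card

/-- Hamming weight of a bit string. -/
def hwt {n : ℕ} (s : Fin n → ZMod 2) : ℕ :=
  (Finset.univ.filter (fun i => s i ≠ 0)).card

/-- The Fourier coefficient `f̂(s) = 2^(−n) · Σ_x f(x)·(−1)^(s·x)`. -/
def fcoef {n : ℕ} (f : (Fin n → ZMod 2) → ℝ) (s : Fin n → ZMod 2) : ℝ :=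
  (2 : ℝ) ^ (-(n : ℤ)) * ∑ x : Fin n → ZMod 2, f x * (-1) ^ (bdot s x)

/-- The noise operator: `(N_ε p)(x) = Σ_y p(y)·(ε/2)^|x⊕y|·(1−ε/2)^(n−|x⊕y|)`. -/
def noiseOp {n : ℕ} (ε : ℝ) (p : (Fin n → ZMod 2) → ℝ) (x : Fin n → ZMod 2) : ℝ :=
  ∑ y : Fin n → ZMod 2,
    p y * (ε / 2) ^ (hwt (x + y)) * (1 - ε / 2) ^ (n - hwt (x + y))

/-!
Expand everything in the Walsh basis `χ_s(x) = (-1)^(s·x)`. The noise operator is diagonal in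
this basis, `N_ε p = ∑_s (1-ε)^|s| p̂(s) χ_s`, because its kernel is a product over
coordinates. Hence the error `q̃ - N_ε p` has Walsh coefficients `(1-ε)^|s| (p'(s) - p̂(s))`
for `|s| ≤ ℓ` and `-(1-ε)^|s| p̂(s)` otherwise. Cauchy–Schwarz and Parseval bound the `ℓ¹`
norm of the error by `2^n` times the `ℓ²` norm of these coefficients. The low part has at
most `#{s | |s| ≤ ℓ} ≤ n^ℓ + 1` terms, each at most `γ 2^(-n)`; the high part is at most
`(1-ε)^(2ℓ) ∑_s p̂(s)² = (1-ε)^(2ℓ) 2^(-n) ∑_x p(x)² ≤ α (1-ε)^(2ℓ) 4^(-n)`.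
-/

open scoped Matrix

section WalshExpansion

variable {n : ℕ}

def walsh (s x : Fin n → ZMod 2) : ℝ :=
  AddChar.zmodChar 2 (by norm_num : (-1 : ℝ) ^ 2 = 1) (s ⬝ᵥ x)

lemma natCast_bdot (s x : Fin n → ZMod 2) : (bdot s x : ZMod 2) = s ⬝ᵥ x := by
  have hmul : ∀ a b : ZMod 2, a * b = if a = 1 ∧ b = 1 then 1 else 0 := by decide
  simp only [bdot, natCast_card_filter, dotProduct, hmul]

lemma neg_one_pow_bdot (s x : Fin n → ZMod 2) : (-1 : ℝ) ^ bdot s x = walsh s x := by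
  rw [walsh, ← natCast_bdot, AddChar.zmodChar_apply']

lemma walsh_eq_prod (s x : Fin n → ZMod 2) :
    walsh s x = ∏ i, if s i = 1 ∧ x i = 1 then -1 else 1 := by
  rw [← neg_one_pow_bdot, bdot, prod_ite, prod_const_one, mul_one, prod_const]

lemma walsh_comm (s x : Fin n → ZMod 2) : walsh s x = walsh x s := by
  rw [walsh, walsh, dotProduct_comm]

lemma walsh_add_right (s x y : Fin n → ZMod 2) : walsh s (x + y) = walsh s x * walsh s y := by
  rw [walsh, dotProduct_add, AddChar.map_add_eq_mul]; rfl

lemma walsh_add_left (s t x : Fin n → ZMod 2) : walsh (s + t) x = walsh s x * walsh t x := by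
  rw [walsh_comm, walsh_add_right, walsh_comm x, walsh_comm x]

lemma sum_walsh (s : Fin n → ZMod 2) :
    ∑ x, walsh s x = if s = 0 then 2 ^ n else 0 := by
  split_ifs with hs
  · simp [hs, walsh]
  obtain ⟨i, hi⟩ := Function.ne_iff.mp hs
  have hflip : walsh s (Pi.single i 1) = -1 := by
    have hone : ∀ a : ZMod 2, a ≠ 0 → a = 1 := by decide
    rw [walsh, dotProduct_single, hone _ hi, mul_one, AddChar.zmodChar_apply, ZMod.val_one]
    norm_num
  refine eq_zero_of_mul_eq_self_left (b := walsh s (Pi.single i 1)) (by norm_num [hflip]) ?_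
  rw [mul_sum]
  exact Fintype.sum_equiv (Equiv.addLeft _) _ _ fun x ↦ (walsh_add_right ..).symm

lemma sum_walsh_mul_walsh (s t : Fin n → ZMod 2) :
    ∑ x, walsh s x * walsh t x = if s = t then 2 ^ n else 0 := by
  have hneg : -t = t := funext fun i ↦ ZMod.neg_eq_self_mod_two (t i)
  simp_rw [← walsh_add_left, sum_walsh, add_eq_zero_iff_eq_neg, hneg]

lemma sum_sq_sum_mul_walsh (c : (Fin n → ZMod 2) → ℝ) :
    ∑ x, (∑ s, c s * walsh s x) ^ 2 = 2 ^ n * ∑ s, c s ^ 2 := by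
  calc ∑ x, (∑ s, c s * walsh s x) ^ 2
      = ∑ s, ∑ t, c s * c t * ∑ x, walsh s x * walsh t x := by
        simp_rw [sq, sum_mul_sum, mul_sum]
        rw [sum_comm]
        refine sum_congr rfl fun s _ ↦ ?_
        rw [sum_comm]
        exact sum_congr rfl fun t _ ↦ sum_congr rfl fun x _ ↦ by ring
    _ = 2 ^ n * ∑ s, c s ^ 2 := by
        simp_rw [sum_walsh_mul_walsh, mul_ite, mul_zero, sum_ite_eq, mem_univ,
          if_true, mul_sum]
        exact sum_congr rfl fun s _ ↦ by ring

lemma fcoef_eq_sum_mul_walsh (f : (Fin n → ZMod 2) → ℝ) (s : Fin n → ZMod 2) :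
    fcoef f s = (2 ^ n)⁻¹ * ∑ x, f x * walsh s x := by
  simp_rw [fcoef, neg_one_pow_bdot, zpow_neg, zpow_natCast]

lemma sum_fcoef_mul_walsh (f : (Fin n → ZMod 2) → ℝ) (x : Fin n → ZMod 2) :
    ∑ s, fcoef f s * walsh s x = f x := by
  calc ∑ s, fcoef f s * walsh s x
      = (2 ^ n)⁻¹ * ∑ y, f y * ∑ s, walsh y s * walsh x s := by
        simp_rw [fcoef_eq_sum_mul_walsh, mul_sum, sum_mul]
        rw [sum_comm]
        exact sum_congr rfl fun y _ ↦ sum_congr rfl fun s _ ↦ by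
          rw [walsh_comm s y, walsh_comm s x]; ring
    _ = f x := by
        simp_rw [sum_walsh_mul_walsh, mul_ite, mul_zero, sum_ite_eq', mem_univ, if_true]
        field_simp

lemma sum_fcoef_sq (f : (Fin n → ZMod 2) → ℝ) :
    ∑ s, fcoef f s ^ 2 = (2 ^ n)⁻¹ * ∑ x, f x ^ 2 := by
  simp_rw [← sum_fcoef_mul_walsh f, sum_sq_sum_mul_walsh]
  field_simp

lemma prod_ite_eq_zero_eq_pow_mul_pow (a b : ℝ) (z : Fin n → ZMod 2) :
    ∏ i, (if z i = 0 then a else b) = a ^ (n - hwt z) * b ^ hwt z := by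
  have hcard := card_filter_add_card_filter_not (s := univ) (fun i ↦ z i = 0)
  rw [card_univ, Fintype.card_fin] at hcard
  rw [prod_ite, prod_const, prod_const, hwt]
  congr 2
  simp only [ne_eq]
  omega

lemma sum_pow_hwt_mul_walsh (ρ : ℝ) (z : Fin n → ZMod 2) :
    ∑ s, ρ ^ hwt s * walsh s z = ∏ i, (if z i = 0 then 1 + ρ else 1 - ρ) := by
  have hcoord : ∀ c : ZMod 2, ∑ b : ZMod 2,
      (if b ≠ 0 then ρ else 1) * (if b = 1 ∧ c = 1 then -1 else 1) =
        if c = 0 then 1 + ρ else 1 - ρ := by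
    intro c
    rw [show ∀ f : ZMod 2 → ℝ, ∑ b, f b = f 0 + f 1 from Fin.sum_univ_two]
    obtain rfl | rfl : c = 0 ∨ c = 1 := by revert c; decide
    · norm_num
    · norm_num
      ring
  simp_rw [hwt, ← prod_const, prod_filter, walsh_eq_prod, ← prod_mul_distrib]
  rw [← Fintype.prod_sum fun i (b : ZMod 2) ↦
    (if b ≠ 0 then ρ else 1) * (if b = 1 ∧ z i = 1 then -1 else 1)]
  exact prod_congr rfl fun i _ ↦ hcoord (z i)

lemma hwt_le (z : Fin n → ZMod 2) : hwt z ≤ n :=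
  (card_filter_le _ _).trans_eq (card_fin n)

lemma noiseOp_kernel_eq_sum_walsh (ε : ℝ) (z : Fin n → ZMod 2) :
    (ε / 2) ^ hwt z * (1 - ε / 2) ^ (n - hwt z) =
      (2 ^ n)⁻¹ * ∑ s, (1 - ε) ^ hwt s * walsh s z := by
  have hsplit : (2 : ℝ) ^ n = 2 ^ (n - hwt z) * 2 ^ hwt z := by
    rw [← pow_add, Nat.sub_add_cancel (hwt_le z)]
  rw [sum_pow_hwt_mul_walsh, prod_ite_eq_zero_eq_pow_mul_pow, hsplit, div_pow,
    show 1 - ε / 2 = (1 + (1 - ε)) / 2 by ring, div_pow, sub_sub_cancel]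
  field_simp

lemma noiseOp_eq_sum_walsh (ε : ℝ) (p : (Fin n → ZMod 2) → ℝ) (x : Fin n → ZMod 2) :
    noiseOp ε p x = ∑ s, (1 - ε) ^ hwt s * fcoef p s * walsh s x := by
  simp_rw [noiseOp, mul_assoc, noiseOp_kernel_eq_sum_walsh, walsh_add_right, fcoef_eq_sum_mul_walsh]
  simp only [mul_sum, sum_mul]
  rw [sum_comm]
  exact sum_congr rfl fun s _ ↦ sum_congr rfl fun y _ ↦ by ring

lemma exists_indicator_range_eq (ℓ : ℕ) {s : Fin n → ZMod 2} (hs : s ≠ 0)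
    (hℓ : hwt s ≤ ℓ) :
    ∃ f : Fin ℓ → Fin n, (fun i ↦ if i ∈ Set.range f then 1 else 0) = s := by
  classical
  set t : Finset (Fin n) := {i | s i ≠ 0}
  obtain ⟨i₀, hi₀⟩ := Function.ne_iff.mp hs
  have : Nonempty t := ⟨⟨i₀, by simpa [t] using hi₀⟩⟩
  obtain ⟨g, hg⟩ := Function.exists_surjective_iff.mpr
    ⟨inferInstance, Function.Embedding.nonempty_of_card_le (α := t) (β := Fin ℓ)
      (by rwa [Fintype.card_coe, Fintype.card_fin])⟩
  refine ⟨Subtype.val ∘ g, funext fun i ↦ ?_⟩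
  have hindicator : ∀ a : ZMod 2, (if a ≠ 0 then 1 else 0) = a := by decide
  simpa [Set.range_comp, hg.range_eq, t] using hindicator (s i)

lemma card_filter_hwt_le (ℓ : ℕ) : #{s : Fin n → ZMod 2 | hwt s ≤ ℓ} ≤ n ^ ℓ + 1 := by
  classical
  have hnonzero : #{s : Fin n → ZMod 2 | s ≠ 0 ∧ hwt s ≤ ℓ} ≤ n ^ ℓ := by
    refine (card_le_card_of_surjOn (s := univ)
      (fun (f : Fin ℓ → Fin n) i ↦ if i ∈ Set.range f then (1 : ZMod 2) else 0)
      fun s hs ↦ ?_).trans (by simp)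
    rw [mem_coe, mem_filter] at hs
    simpa using exists_indicator_range_eq ℓ hs.2.1 hs.2.2
  calc #{s : Fin n → ZMod 2 | hwt s ≤ ℓ}
      ≤ #(insert 0 ({s | s ≠ 0 ∧ hwt s ≤ ℓ} : Finset (Fin n → ZMod 2))) :=
        card_le_card fun s hs ↦ by
          by_cases h0 : s = 0
          · simp [h0]
          · simp_all
    _ ≤ n ^ ℓ + 1 := (card_insert_le _ _).trans (by omega)

lemma sum_abs_le_sqrt_card_mul_sum_sq {ι : Type*} [Fintype ι] (f : ι → ℝ) :
    ∑ i, |f i| ≤ √(Fintype.card ι * ∑ i, f i ^ 2) := by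
  refine Real.le_sqrt_of_sq_le ?_
  simpa only [sq_abs, card_univ] using sq_sum_le_card_mul_sum_sq (s := univ) (f := fun i ↦ |f i|)

lemma sum_abs_sum_mul_walsh_le (c : (Fin n → ZMod 2) → ℝ) :
    ∑ x, |∑ s, c s * walsh s x| ≤ √((2 ^ n) ^ 2 * ∑ s, c s ^ 2) := by
  refine (sum_abs_le_sqrt_card_mul_sum_sq _).trans_eq ?_
  rw [sum_sq_sum_mul_walsh]
  simp [sq, mul_assoc]

lemma sq_truncated_sub_le {ρ a b δ : ℝ} {k ℓ : ℕ} (hρ0 : 0 ≤ ρ) (hρ1 : ρ ≤ 1)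
    (hab : k ≤ ℓ → |a - b| ≤ δ) :
    ((if k ≤ ℓ then ρ ^ k * a else 0) - ρ ^ k * b) ^ 2 ≤
      (if k ≤ ℓ then δ ^ 2 else 0) + ρ ^ (2 * ℓ) * b ^ 2 := by
  split_ifs with hk
  · have hρk : (ρ ^ k) ^ 2 ≤ 1 := pow_le_one₀ (by positivity) (pow_le_one₀ hρ0 hρ1)
    have hδ : (a - b) ^ 2 ≤ δ ^ 2 := by
      rw [← sq_abs]
      exact pow_le_pow_left₀ (abs_nonneg _) (hab hk) 2
    have : 0 ≤ ρ ^ (2 * ℓ) * b ^ 2 := by positivity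
    nlinarith [sq_nonneg (a - b)]
  · calc (0 - ρ ^ k * b) ^ 2 = ρ ^ (2 * k) * b ^ 2 := by ring
      _ ≤ ρ ^ (2 * ℓ) * b ^ 2 :=
        mul_le_mul_of_nonneg_right (pow_le_pow_of_le_one hρ0 hρ1 (by omega)) (sq_nonneg b)
      _ = 0 + ρ ^ (2 * ℓ) * b ^ 2 := (zero_add _).symm

lemma sum_sq_truncated_sub_le {ρ δ : ℝ} (hρ0 : 0 ≤ ρ) (hρ1 : ρ ≤ 1) (ℓ : ℕ)
    (a b : (Fin n → ZMod 2) → ℝ) (hab : ∀ s, hwt s ≤ ℓ → |a s - b s| ≤ δ) :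
    ∑ s, ((if hwt s ≤ ℓ then ρ ^ hwt s * a s else 0) - ρ ^ hwt s * b s) ^ 2 ≤
      ((n : ℝ) ^ ℓ + 1) * δ ^ 2 + ρ ^ (2 * ℓ) * ∑ s, b s ^ 2 := by
  calc _ ≤ ∑ s, ((if hwt s ≤ ℓ then δ ^ 2 else 0) + ρ ^ (2 * ℓ) * b s ^ 2) :=
        sum_le_sum fun s _ ↦ sq_truncated_sub_le hρ0 hρ1 (hab s)
    _ = #{s : Fin n → ZMod 2 | hwt s ≤ ℓ} * δ ^ 2 + ρ ^ (2 * ℓ) * ∑ s, b s ^ 2 := by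
        rw [sum_add_distrib, ← mul_sum, ← sum_filter, sum_const, nsmul_eq_mul]
    _ ≤ ((n : ℝ) ^ ℓ + 1) * δ ^ 2 + ρ ^ (2 * ℓ) * ∑ s, b s ^ 2 := by
        gcongr
        exact_mod_cast card_filter_hwt_le ℓ

end WalshExpansion

theorem truncated_reconstruction_error_general (n : ℕ) (p : (Fin n → ZMod 2) → ℝ)
    (α : ℝ) (hp2 : ∑ x : Fin n → ZMod 2, (p x) ^ 2 ≤ α * (2 : ℝ) ^ (-(n : ℤ)))
    (ε : ℝ) (hε0 : 0 < ε) (hε1 : ε < 1) (ℓ : ℕ) (γ : ℝ)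
    (p' : (Fin n → ZMod 2) → ℝ)
    (happrox : ∀ s : Fin n → ZMod 2, hwt s ≤ ℓ → |p' s - fcoef p s| ≤ γ * (2 : ℝ) ^ (-(n : ℤ))) :
    ∑ x : Fin n → ZMod 2,
        |(∑ s ∈ Finset.univ.filter (fun s : Fin n → ZMod 2 => hwt s ≤ ℓ),
            (1 - ε) ^ (hwt s) * p' s * (-1 : ℝ) ^ (bdot s x))
          - noiseOp ε p x|
      ≤ Real.sqrt (γ ^ 2 * ((n : ℝ) ^ ℓ + 1) + α * (1 - ε) ^ (2 * ℓ)) := by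
  rw [zpow_neg, zpow_natCast] at hp2 happrox
  set c : (Fin n → ZMod 2) → ℝ := fun s ↦
    (if hwt s ≤ ℓ then (1 - ε) ^ hwt s * p' s else 0) - (1 - ε) ^ hwt s * fcoef p s
  have herr : ∀ x, (∑ s with hwt s ≤ ℓ, (1 - ε) ^ hwt s * p' s * (-1 : ℝ) ^ bdot s x) -
      noiseOp ε p x = ∑ s, c s * walsh s x := fun x ↦ by
    simp_rw [c, noiseOp_eq_sum_walsh, neg_one_pow_bdot, sub_mul, sum_sub_distrib, ite_mul,
      zero_mul, ← sum_filter]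
  have hc : ∑ s, c s ^ 2 ≤
      ((2 ^ n)⁻¹) ^ 2 * (γ ^ 2 * ((n : ℝ) ^ ℓ + 1) + α * (1 - ε) ^ (2 * ℓ)) :=
    calc ∑ s, c s ^ 2
        ≤ ((n : ℝ) ^ ℓ + 1) * (γ * (2 ^ n)⁻¹) ^ 2 +
            (1 - ε) ^ (2 * ℓ) * ((2 ^ n)⁻¹ * ∑ x, p x ^ 2) := by
          rw [← sum_fcoef_sq]
          exact sum_sq_truncated_sub_le (by linarith) (by linarith) ℓ p' (fcoef p) happrox
      _ ≤ ((n : ℝ) ^ ℓ + 1) * (γ * (2 ^ n)⁻¹) ^ 2 +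
            (1 - ε) ^ (2 * ℓ) * ((2 ^ n)⁻¹ * (α * (2 ^ n)⁻¹)) := by gcongr
      _ = _ := by ring
  calc _ = ∑ x, |∑ s, c s * walsh s x| := by simp_rw [herr]
    _ ≤ √((2 ^ n) ^ 2 * ∑ s, c s ^ 2) := sum_abs_sum_mul_walsh_le c
    _ ≤ _ := Real.sqrt_le_sqrt <|
        (mul_le_mul_of_nonneg_left hc (by positivity)).trans_eq (by field_simp)

/-- if `p` is a probability distribution with `Σ_x p(x)² ≤ α·2^(−n)` and
`p'` approximates the low-order Fourier coefficients of `p` up to `γ·2^(−n)`, then the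
truncated noisy reconstruction `q̃` satisfies
`Σ_x |q̃(x) − (N_ε p)(x)| ≤ sqrt(γ²·(n^ℓ + 1) + α·(1−ε)^(2ℓ))`. -/
theorem truncated_reconstruction_error (n : ℕ) (p : (Fin n → ZMod 2) → ℝ)
    (hpos : ∀ x, 0 ≤ p x) (hsum : ∑ x : Fin n → ZMod 2, p x = 1)
    (α : ℝ) (hα : 0 < α) (hp2 : ∑ x : Fin n → ZMod 2, (p x) ^ 2 ≤ α * (2 : ℝ) ^ (-(n : ℤ)))
    (ε : ℝ) (hε0 : 0 < ε) (hε1 : ε < 1) (ℓ : ℕ) (γ : ℝ) (hγ : 0 < γ)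
    (p' : (Fin n → ZMod 2) → ℝ)
    (happrox : ∀ s : Fin n → ZMod 2, hwt s ≤ ℓ → |p' s - fcoef p s| ≤ γ * (2 : ℝ) ^ (-(n : ℤ))) :
    ∑ x : Fin n → ZMod 2,
        |(∑ s ∈ Finset.univ.filter (fun s : Fin n → ZMod 2 => hwt s ≤ ℓ),
            (1 - ε) ^ (hwt s) * p' s * (-1 : ℝ) ^ (bdot s x))
          - noiseOp ε p x|
      ≤ Real.sqrt (γ ^ 2 * ((n : ℝ) ^ ℓ + 1) + α * (1 - ε) ^ (2 * ℓ)) :=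
  truncated_reconstruction_error_general n p α hp2 ε hε0 hε1 ℓ γ p' happrox

end
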